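/- arXiv:2008.03942 — 2 statements merged into one kernel-verified Lean document; each statement's English description precedes it below -/
import Mathlib

section
/- Let R be an L×P real matrix with operator norm ‖R‖, let ρ > 0 and μ > ρ·‖R‖², let X ⊆ ℝ^P, let Y ⊆ ℝ^L be convex, let f : ℝ^P → ℝ, and let g : ℝ^L → ℝ be convex. Let (xʲ, yʲ, zʲ)_{j≥1} be sequences with xʲ ∈ X, yʲ ∈ Y such that for every j: (i) x^{j+1} minimizes x ↦ f(x) + ⟨∇h_j(xʲ), x − xʲ⟩ + (μ/2)‖x − xʲ‖² over X with h_j(x) = (ρ/2)‖yʲ − Rx + zʲ/ρ‖²; (ii) y^{j+1} minimizes y ↦ g(y) + (ρ/2)‖y − Rx^{j+1} + zʲ/ρ‖² over Y; (iii) z^{j+1} = zʲ + ρ(y^{j+1} − Rx^{j+1}). Assume further that the sequence L_ρ(xʲ, yʹ; zʲ) = f(xʲ) + g(yʲ) + ⟨zʲ, yʲ − Rxʲ⟩ + (ρ/2)‖yʲ − Rxʲ‖² is bounded below and that Σ_j ‖z^{j+1} − zʲ‖² < ∞. Then Σ_j ‖x^{j+1} − xʲ‖² < ∞ and Σ_j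 ‖y^{j+1} − yʲ‖² < ∞; in particular x^{j+1} − xʲ → 0, y^{j+1} − yʲ → 0, and yʲ − Rxʲ → 0 as j → ∞. -/
/-!
Each ADMM sweep lowers the augmented Lagrangian `L_ρ` by at least
`(μ - ρ‖R‖²)/2 ‖Δx‖² + ρ/2 ‖Δy‖²`, up to the increase `ρ⁻¹‖Δz‖²` caused by the multiplier step:
the linearized `x`-step errs by at most `ρ‖R‖²/2 ‖Δx‖²` because the coupling term is a quadratic,
and the `y`-step objective is `ρ`-strongly convex, so its minimizer beats `yʲ` by `ρ/2 ‖Δy‖²`.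
Telescoping against the lower bound on `L_ρ` and the summable `‖Δz‖²` gives square-summability,
and feasibility follows from `y^{j+1} - R x^{j+1} = ρ⁻¹ (z^{j+1} - zʲ)`.
-/

open Filter Topology
open scoped RealInnerProductSpace

lemma summable_of_add_le_add_of_bddBelow {V d e : ℕ → ℝ} (hd : ∀ j, 0 ≤ d j) (he : Summable e)
    (hV : BddBelow (Set.range V)) (hstep : ∀ j, V (j + 1) + d j ≤ V j + e j) : Summable d := by
  obtain ⟨B, hB⟩ := hV
  obtain ⟨C, hC⟩ := he.hasSum.tendsto_sum_nat.bddAbove_range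
  have htelescope : ∀ n, V n + ∑ j ∈ Finset.range n, d j ≤ V 0 + ∑ j ∈ Finset.range n, e j := by
    intro n
    induction n with
    | zero => simp
    | succ n ih => rw [Finset.sum_range_succ, Finset.sum_range_succ]; linarith [hstep n]
  refine summable_of_sum_range_le (c := V 0 - B + C) hd fun n => ?_
  linarith [htelescope n, hB ⟨n, rfl⟩, hC ⟨n, rfl⟩]

lemma tendsto_zero_of_summable_norm_sq {E : Type*} [SeminormedAddCommGroup E] {u : ℕ → E}
    (h : Summable fun j => ‖u j‖ ^ 2) : Tendsto u atTop (𝓝 0) := by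
  rw [tendsto_zero_iff_norm_tendsto_zero]
  simpa using h.tendsto_atTop_zero.sqrt

section InnerProduct

variable {E F : Type*} [NormedAddCommGroup E] [InnerProductSpace ℝ E]
  [NormedAddCommGroup F] [InnerProductSpace ℝ F]

lemma inner_gradient_half_mul_norm_sub_sq [CompleteSpace E] (ρ : ℝ) (R : E →L[ℝ] F) (w : F)
    (x₀ v : E) :
    ⟪gradient (fun x => ρ / 2 * ‖w - R x‖ ^ 2) x₀, v⟫ = ρ * ⟪R x₀ - w, R v⟫ := by
  have hderiv := (((R.hasFDerivAt (x := x₀)).const_sub w).norm_sq).const_mul (ρ / 2)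
  rw [gradient, hderiv.fderiv, InnerProductSpace.toDual_symm_apply]
  simp only [map_sub, ContinuousLinearMap.comp_neg, ContinuousLinearMap.sub_comp, neg_sub,
    smul_apply, sub_apply, ContinuousLinearMap.comp_apply,
    coe_innerSL_apply, nsmul_eq_mul, Nat.cast_ofNat, smul_eq_mul, inner_sub_left]
  ring

lemma half_mul_norm_sub_sq_le [CompleteSpace E] {ρ : ℝ} (hρ : 0 ≤ ρ) (R : E →L[ℝ] F) (w : F)
    (x₀ x₁ : E) :
    ρ / 2 * ‖w - R x₁‖ ^ 2 ≤ ρ / 2 * ‖w - R x₀‖ ^ 2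
      + ⟪gradient (fun x => ρ / 2 * ‖w - R x‖ ^ 2) x₀, x₁ - x₀⟫
      + ρ * ‖R‖ ^ 2 / 2 * ‖x₁ - x₀‖ ^ 2 := by
  have hsplit : w - R x₁ = (w - R x₀) - R (x₁ - x₀) := by rw [map_sub]; abel
  have hR : ‖R (x₁ - x₀)‖ ^ 2 ≤ ‖R‖ ^ 2 * ‖x₁ - x₀‖ ^ 2 := by
    rw [← mul_pow]; gcongr; exact R.le_opNorm _
  rw [inner_gradient_half_mul_norm_sub_sq, hsplit, norm_sub_sq_real, ← neg_sub w, inner_neg_left]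
  nlinarith

lemma ConvexOn.strongConvexOn_add_half_mul_norm_sub_sq {s : Set F} {g : F → ℝ}
    (hg : ConvexOn ℝ s g) (m : ℝ) (a : F) :
    StrongConvexOn s m fun y => g y + m / 2 * ‖y - a‖ ^ 2 := by
  rw [strongConvexOn_iff_convex]
  have hexpand : (fun y => g y + m / 2 * ‖y - a‖ ^ 2 - m / 2 * ‖y‖ ^ 2)
      = g + ⇑((-m) • innerₗ F a) + fun _ => m / 2 * ‖a‖ ^ 2 := by
    funext y
    simp only [norm_sub_sq_real, real_inner_comm, LinearMap.coe_smul, neg_smul, Pi.add_apply,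
      Pi.neg_apply, Pi.smul_apply, innerₗ_apply_apply, smul_eq_mul]
    ring
  rw [hexpand]
  exact (hg.add (((-m) • innerₗ F a).convexOn hg.1)).add_const _

lemma StrongConvexOn.add_half_mul_norm_sub_sq_le_of_isMinOn {s : Set E} {m : ℝ} {φ : E → ℝ}
    (hφ : StrongConvexOn s m φ) {x₀ x : E} (hx₀ : x₀ ∈ s) (hmin : IsMinOn φ s x₀) (hx : x ∈ s) :
    φ x₀ + m / 2 * ‖x - x₀‖ ^ 2 ≤ φ x := by
  have hchord : ∀ n : ℕ, φ x₀ + (1 - 1 / (n + 1 : ℝ)) * (m / 2 * ‖x - x₀‖ ^ 2) ≤ φ x := by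
    intro n
    set t : ℝ := 1 / (n + 1)
    have ht : 0 < t := by positivity
    have ht1 : t ≤ 1 := div_le_one_of_le₀ (by linarith [n.cast_nonneg (α := ℝ)]) (by positivity)
    have hconv := hφ.2 hx hx₀ ht.le (sub_nonneg.2 ht1) (add_sub_cancel t 1)
    have hle := hmin (hφ.1 hx hx₀ ht.le (sub_nonneg.2 ht1) (add_sub_cancel t 1))
    simp only [smul_eq_mul, Set.mem_ofPred_eq] at hconv hle
    have : t * (φ x₀ + (1 - t) * (m / 2 * ‖x - x₀‖ ^ 2)) ≤ t * φ x := by nlinarith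
    exact le_of_mul_le_mul_left this ht
  have hlim := ((tendsto_one_div_add_atTop_nhds_zero_nat (𝕜 := ℝ)).const_sub 1).mul_const
    (m / 2 * ‖x - x₀‖ ^ 2) |>.const_add (φ x₀)
  simpa using le_of_tendsto' hlim hchord

variable (f : E → ℝ) (g : F → ℝ) (R : E →L[ℝ] F) {ρ : ℝ}

noncomputable def augLagrangian (ρ : ℝ) (x : E) (y z : F) : ℝ :=
  f x + g y + ⟪z, y - R x⟫ + ρ / 2 * ‖y - R x‖ ^ 2

lemma augLagrangian_eq_sub (hρ : ρ ≠ 0) (x : E) (y z : F) :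
    augLagrangian f g R ρ x y z
      = f x + g y + ρ / 2 * ‖y - R x + ρ⁻¹ • z‖ ^ 2 - (2 * ρ)⁻¹ * ‖z‖ ^ 2 := by
  rw [augLagrangian, norm_add_sq_real, real_inner_smul_right, real_inner_comm, norm_smul,
    mul_pow, Real.norm_eq_abs, sq_abs]
  field_simp
  ring

lemma augLagrangian_x_step [CompleteSpace E] {μ : ℝ} (hρ : 0 < ρ) {x₀ x₁ : E} {y z : F}
    (hstep : f x₁ + ⟪gradient (fun x => ρ / 2 * ‖y - R x + ρ⁻¹ • z‖ ^ 2) x₀, x₁ - x₀⟫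
      + μ / 2 * ‖x₁ - x₀‖ ^ 2 ≤ f x₀) :
    augLagrangian f g R ρ x₁ y z + (μ - ρ * ‖R‖ ^ 2) / 2 * ‖x₁ - x₀‖ ^ 2
      ≤ augLagrangian f g R ρ x₀ y z := by
  have hshift : ∀ x, y - R x + ρ⁻¹ • z = (y + ρ⁻¹ • z) - R x := fun x => by abel
  simp only [hshift] at hstep
  have hdescent := half_mul_norm_sub_sq_le hρ.le R (y + ρ⁻¹ • z) x₀ x₁
  rw [augLagrangian_eq_sub f g R hρ.ne', augLagrangian_eq_sub f g R hρ.ne', hshift, hshift]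
  linarith

lemma augLagrangian_y_step (hρ : 0 < ρ) {Ys : Set F} (hg : ConvexOn ℝ Ys g) {x : E} {y₀ y₁ z : F}
    (hy₀ : y₀ ∈ Ys) (hy₁ : y₁ ∈ Ys)
    (hmin : ∀ y ∈ Ys, g y₁ + ρ / 2 * ‖y₁ - R x + ρ⁻¹ • z‖ ^ 2
      ≤ g y + ρ / 2 * ‖y - R x + ρ⁻¹ • z‖ ^ 2) :
    augLagrangian f g R ρ x y₁ z + ρ / 2 * ‖y₁ - y₀‖ ^ 2 ≤ augLagrangian f g R ρ x y₀ z := by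
  have hshift : ∀ y, y - R x + ρ⁻¹ • z = y - (R x - ρ⁻¹ • z) := fun y => by abel
  simp only [hshift] at hmin
  have hgrowth := (hg.strongConvexOn_add_half_mul_norm_sub_sq ρ (R x - ρ⁻¹ • z))
    |>.add_half_mul_norm_sub_sq_le_of_isMinOn hy₁ hmin hy₀
  rw [augLagrangian_eq_sub f g R hρ.ne', augLagrangian_eq_sub f g R hρ.ne', hshift, hshift,
    norm_sub_rev y₁ y₀]
  linarith

lemma augLagrangian_z_step {x : E} {y z₀ z₁ : F} (hz : z₁ = z₀ + ρ • (y - R x)) :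
    augLagrangian f g R ρ x y z₁ = augLagrangian f g R ρ x y z₀ + ρ⁻¹ * ‖z₁ - z₀‖ ^ 2 := by
  subst hz
  rw [augLagrangian, augLagrangian, add_sub_cancel_left, inner_add_left, real_inner_smul_left,
    real_inner_self_eq_norm_sq, norm_smul, mul_pow, Real.norm_eq_abs, sq_abs]
  field_simp
  ring

end InnerProduct

/-- Quantitative conclusions in the proof of Theorem 1 of the paper: for the
proximal-linearized nonconvex ADMM iterates, if the augmented Lagrangian values are
bounded below and the multiplier differences are square-summable, then the successive
primal differences are square-summable (hence vanish) and `yʲ − Rxʲ → 0`. -/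
theorem stmt17 (L P : ℕ) (ρ μ : ℝ) (hρ : 0 < ρ)
    (R : EuclideanSpace ℝ (Fin P) →L[ℝ] EuclideanSpace ℝ (Fin L))
    (hμ : ρ * ‖R‖ ^ 2 < μ)
    (Xs : Set (EuclideanSpace ℝ (Fin P))) (Ys : Set (EuclideanSpace ℝ (Fin L)))
    (hYs : Convex ℝ Ys)
    (f : EuclideanSpace ℝ (Fin P) → ℝ) (g : EuclideanSpace ℝ (Fin L) → ℝ)
    (hg : ConvexOn ℝ Set.univ g)
    (x : ℕ → EuclideanSpace ℝ (Fin P)) (y z : ℕ → EuclideanSpace ℝ (Fin L))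
    (hx : ∀ j, x j ∈ Xs) (hy : ∀ j, y j ∈ Ys)
    (h : ℕ → EuclideanSpace ℝ (Fin P) → ℝ)
    (hh : ∀ j x', h j x' = (ρ / 2) * ‖y j - R x' + ρ⁻¹ • z j‖ ^ 2)
    (hxmin : ∀ j, ∀ x' ∈ Xs,
      f (x (j + 1)) + ⟪gradient (h j) (x j), x (j + 1) - x j⟫
          + (μ / 2) * ‖x (j + 1) - x j‖ ^ 2
        ≤ f x' + ⟪gradient (h j) (x j), x' - x j⟫ + (μ / 2) * ‖x' - x j‖ ^ 2)
    (hymin : ∀ j, ∀ y' ∈ Ys,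
      g (y (j + 1)) + (ρ / 2) * ‖y (j + 1) - R (x (j + 1)) + ρ⁻¹ • z j‖ ^ 2
        ≤ g y' + (ρ / 2) * ‖y' - R (x (j + 1)) + ρ⁻¹ • z j‖ ^ 2)
    (hz : ∀ j, z (j + 1) = z j + ρ • (y (j + 1) - R (x (j + 1))))
    (hbdd : ∃ B : ℝ, ∀ j, B ≤
      f (x j) + g (y j) + ⟪z j, y j - R (x j)⟫ + (ρ / 2) * ‖y j - R (x j)‖ ^ 2)
    (hsz : Summable (fun j => ‖z (j + 1) - z j‖ ^ 2)) :
    Summable (fun j => ‖x (j + 1) - x j‖ ^ 2) ∧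
    Summable (fun j => ‖y (j + 1) - y j‖ ^ 2) ∧
    Tendsto (fun j => x (j + 1) - x j) atTop (nhds 0) ∧
    Tendsto (fun j => y (j + 1) - y j) atTop (nhds 0) ∧
    Tendsto (fun j => y j - R (x j)) atTop (nhds 0) := by
  set V := fun j => augLagrangian f g R ρ (x j) (y j) (z j)
  have hc : 0 < (μ - ρ * ‖R‖ ^ 2) / 2 := by linarith
  have hdescent : ∀ j, V (j + 1) + ((μ - ρ * ‖R‖ ^ 2) / 2 * ‖x (j + 1) - x j‖ ^ 2
      + ρ / 2 * ‖y (j + 1) - y j‖ ^ 2) ≤ V j + ρ⁻¹ * ‖z (j + 1) - z j‖ ^ 2 := by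
    intro j
    have hxstep := augLagrangian_x_step f g R (μ := μ) hρ (x₀ := x j) (x₁ := x (j + 1))
      (y := y j) (z := z j) (by simpa [funext (hh j)] using hxmin j (x j) (hx j))
    have hystep := augLagrangian_y_step f g R hρ (hg.subset (Set.subset_univ _) hYs)
      (hy j) (hy (j + 1)) (hymin j)
    have hzstep := augLagrangian_z_step f g R (hz j)
    simp only [V]
    linarith
  have hsum := summable_of_add_le_add_of_bddBelow (fun j => by positivity) (hsz.mul_left ρ⁻¹)
    (hbdd.imp fun B hB => by rintro _ ⟨j, rfl⟩; exact hB j) hdescent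
  have hsx : Summable fun j => ‖x (j + 1) - x j‖ ^ 2 :=
    (hsum.mul_left ((μ - ρ * ‖R‖ ^ 2) / 2)⁻¹).of_nonneg_of_le (fun _ => by positivity)
      fun j => by rw [le_inv_mul_iff₀ hc]; nlinarith [sq_nonneg ‖y (j + 1) - y j‖]
  have hsy : Summable fun j => ‖y (j + 1) - y j‖ ^ 2 :=
    (hsum.mul_left (ρ / 2)⁻¹).of_nonneg_of_le (fun _ => by positivity)
      fun j => by rw [le_inv_mul_iff₀ (by positivity)]; nlinarith [sq_nonneg ‖x (j + 1) - x j‖]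
  have hfeas : ∀ j, y (j + 1) - R (x (j + 1)) = ρ⁻¹ • (z (j + 1) - z j) := fun j => by
    rw [hz j, add_sub_cancel_left, smul_smul, inv_mul_cancel₀ hρ.ne', one_smul]
  refine ⟨hsx, hsy, tendsto_zero_of_summable_norm_sq hsx, tendsto_zero_of_summable_norm_sq hsy,
    (tendsto_add_atTop_iff_nat 1).mp ?_⟩
  simpa [hfeas] using (tendsto_zero_of_summable_norm_sq hsz).const_smul ρ⁻¹
end

section
/- Let β, s, μ > 0, let P ≥ 1, let ν ∈ ℝ^P, and suppose x* minimizes F(x) = −β·log(Σᵢ xᵢ) + s/(Σᵢ xᵢ) + (μ/2)·‖x − ν‖² over {x ∈ ℝ^P : x ≥ 0, Σᵢ xᵢ > 0}. If ζ > 0 is such that μζ = β/T + s/T² with T = Σᵢ x*ᵢ, then there is no index i with νᵢ + ζ > 0 and x*ᵢ = 0; that is, every coordinate with νᵢ + ζ > 0 is strictly positive at the optimum. -/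
/-!
At a minimizer, moving along the `i`-th coordinate upwards stays feasible, so the partial
derivative `-β/T - s/T² + μ(x*ᵢ - νᵢ)` of the objective is nonnegative (one-sided Fermat rule).
With `μζ = β/T + s/T²` this reads `x*ᵢ ≥ νᵢ + ζ`, which is positive by assumption.
-/

open Finset Function

theorem Fintype.sum_update_eq_sum_add_sub {ι M : Type*} [Fintype ι] [DecidableEq ι]
    [AddCommGroup M] (f : ι → M) (i : ι) (b : M) :
    ∑ j, update f i b j = ∑ j, f j + (b - f i) := by
  rw [sum_update_of_mem (mem_univ i), ← add_sum_erase _ _ (mem_univ i), sdiff_singleton_eq_erase]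
  abel

theorem one_mem_posTangentConeAt_Ici (a : ℝ) : (1 : ℝ) ∈ posTangentConeAt (Set.Ici a) a :=
  mem_posTangentConeAt_of_segment_subset <| by
    rw [segment_eq_Icc (by linarith)]
    exact Set.Icc_subset_Ici_self

section

variable {ι : Type*} [Fintype ι] (β s μ : ℝ) (ν : ι → ℝ)

/-- The objective `F` of the paper. -/
noncomputable def proxObjective (x : ι → ℝ) : ℝ :=
  -β * Real.log (∑ j, x j) + s / (∑ j, x j) + (μ / 2) * ∑ j, (x j - ν j) ^ 2

def feasibleSet : Set (ι → ℝ) := {x | (∀ j, 0 ≤ x j) ∧ 0 < ∑ j, x j}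

variable {β s μ ν}

theorem hasDerivAt_proxObjective_update [DecidableEq ι] {x : ι → ℝ} (hx : ∑ j, x j ≠ 0)
    (i : ι) :
    HasDerivAt (fun t ↦ proxObjective β s μ ν (update x i t))
      (-β / ∑ j, x j - s / (∑ j, x j) ^ 2 + μ * (x i - ν i)) (x i) := by
  set T := ∑ j, x j
  have hsq (t : ℝ) : ∑ j, (update x i t j - ν j) ^ 2
      = ∑ j, (x j - ν j) ^ 2 + ((t - ν i) ^ 2 - (x i - ν i) ^ 2) := by
    rw [← Fintype.sum_update_eq_sum_add_sub]
    congr 1 with j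
    rcases eq_or_ne j i with rfl | hj <;> simp [*]
  have hT : HasDerivAt (fun t ↦ T + (t - x i)) 1 (x i) :=
    ((hasDerivAt_id _).sub_const _).const_add _
  have hT' : T + (x i - x i) ≠ 0 := by simpa using hx
  have hq : HasDerivAt (fun t ↦ (t - ν i) ^ 2) (2 * (x i - ν i)) (x i) := by
    simpa using ((hasDerivAt_id (x i)).sub_const (ν i)).fun_pow 2
  have h := (((hT.log hT').const_mul (-β)).add ((hT.inv hT').const_mul s)).add
    ((hq.const_add (∑ j, (x j - ν j) ^ 2 - (x i - ν i) ^ 2)).const_mul (μ / 2))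
  refine (h.congr_deriv ?_).congr_of_eventuallyEq (.of_forall fun t ↦ ?_)
  · simp only [sub_self, add_zero]
    ring
  · simp only [proxObjective, Fintype.sum_update_eq_sum_add_sub, hsq, Pi.add_apply, Pi.inv_apply]
    ring

theorem IsMinOn.proxObjective_partial_nonneg {xstar : ι → ℝ}
    (hmin : IsMinOn (proxObjective β s μ ν) feasibleSet xstar) (hx : xstar ∈ feasibleSet)
    (i : ι) :
    0 ≤ -β / ∑ j, xstar j - s / (∑ j, xstar j) ^ 2 + μ * (xstar i - ν i) := by
  classical
  have hline : IsMinOn (fun t ↦ proxObjective β s μ ν (update xstar i t)) (Set.Ici (xstar i))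
      (xstar i) := by
    intro t (ht : xstar i ≤ t)
    simp only [Set.mem_ofPred_eq, update_eq_self]
    refine hmin ⟨fun j ↦ ?_, ?_⟩
    · rcases eq_or_ne j i with rfl | hj
      · simpa using (hx.1 j).trans ht
      · simpa [hj] using hx.1 j
    · rw [Fintype.sum_update_eq_sum_add_sub]
      linarith [hx.2]
  simpa using hline.localize.hasFDerivWithinAt_nonneg
    (hasDerivAt_proxObjective_update hx.2.ne' i).hasFDerivAt.hasFDerivWithinAt
    (one_mem_posTangentConeAt_Ici _)

end

theorem stmt18_general (β s μ : ℝ) (hμ : 0 < μ)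
    (P : ℕ) (ν : Fin P → ℝ) (xstar : Fin P → ℝ)
    (hpos : ∀ i, 0 ≤ xstar i) (hsum : 0 < ∑ i, xstar i)
    (hmin : ∀ x : Fin P → ℝ, (∀ i, 0 ≤ x i) → 0 < ∑ i, x i →
      (-β * Real.log (∑ i, xstar i) + s / (∑ i, xstar i)
          + (μ / 2) * ∑ i, (xstar i - ν i) ^ 2)
        ≤ (-β * Real.log (∑ i, x i) + s / (∑ i, x i)
          + (μ / 2) * ∑ i, (x i - ν i) ^ 2))
    (ζ : ℝ)
    (heq : μ * ζ = β / (∑ i, xstar i) + s / (∑ i, xstar i) ^ 2) :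
    ∀ i, 0 < ν i + ζ → 0 < xstar i := by
  intro i hi
  have hkkt := IsMinOn.proxObjective_partial_nonneg (β := β) (s := s) (μ := μ)
    (fun x hx ↦ hmin x hx.1 hx.2) ⟨hpos, hsum⟩ i
  rw [neg_div] at hkkt
  have : 0 < μ * xstar i := by linarith [mul_pos hμ hi]
  exact pos_of_mul_pos_right this hμ.le

/-- Key intermediate claim in the proof of Lemma 1 of the paper: at a minimizer of
the x-subproblem, if ζ > 0 satisfies the stationarity relation
`μζ = β/T + s/T²` with `T = Σᵢ x*ᵢ`, then every coordinate with `νᵢ + ζ > 0`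
is strictly positive at the optimum. -/
theorem stmt18 (β s μ : ℝ) (hβ : 0 < β) (hs : 0 < s) (hμ : 0 < μ)
    (P : ℕ) (hP : 1 ≤ P) (ν : Fin P → ℝ) (xstar : Fin P → ℝ)
    (hpos : ∀ i, 0 ≤ xstar i) (hsum : 0 < ∑ i, xstar i)
    (hmin : ∀ x : Fin P → ℝ, (∀ i, 0 ≤ x i) → 0 < ∑ i, x i →
      (-β * Real.log (∑ i, xstar i) + s / (∑ i, xstar i)
          + (μ / 2) * ∑ i, (xstar i - ν i) ^ 2)
        ≤ (-β * Real.log (∑ i, x i) + s / (∑ i, x i)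
          + (μ / 2) * ∑ i, (x i - ν i) ^ 2))
    (ζ : ℝ) (hζ : 0 < ζ)
    (heq : μ * ζ = β / (∑ i, xstar i) + s / (∑ i, xstar i) ^ 2) :
    ∀ i, 0 < ν i + ζ → 0 < xstar i :=
  stmt18_general β s μ hμ P ν xstar hpos hsum hmin ζ heq
end
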